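/- arXiv:1111.2069 — 3 statements merged into one kernel-verified Lean document; each statement's English description precedes it below -/
import Mathlib

section
/- Let λ > 0, μ > 0 and u < v, and set w = (1/2)√(λ+μ)·(v−u), P_1 = N(v)^{−1}M(v)M(u)^{−1}N(u) and Q_1 = N(v)^{−1}M(v)M(u)^{−1} − N(v)^{−1}. Then the (1,1) entry of P_1 equals (e^{√λ(u−v)}/√(λ(λ+μ)))·[√λ·cosh w + √(λ+μ)·sinh w]·[√(λ+μ)·cosh w + √λ·sinh w], the (1,1) entry of Q_1 equals (e^{−√λ v}/√λ)·sinh w·[√(λ+μ)·cosh w + √λ·sinh w], and consequently γ_0 := −(μ/(λ(λ+μ)))·((1,1) entry of Q_1)/((1,1) entry of P_1) = −(μ/(λ√(λ+μ)))·e^{−√λ u}·sinh w/(√λ·cosh w + √(λ+μ)·sinh w). -/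
open Matrix Real

/-- The fundamental matrix `N(x)` associated with parameter `λ`:
`N(x) = ((e^{√λ x}, e^{−√λ x}), (√λ e^{√λ x}, −√λ e^{−√λ x}))`.
The matrix `M(x)` of the paper is `Nmat (λ+μ) x`. -/
noncomputable def Nmat (lam x : ℝ) : Matrix (Fin 2) (Fin 2) ℝ :=
  !![Real.exp (Real.sqrt lam * x), Real.exp (-(Real.sqrt lam * x));
     Real.sqrt lam * Real.exp (Real.sqrt lam * x),
       -(Real.sqrt lam * Real.exp (-(Real.sqrt lam * x)))]

lemma Nmat_inv (c x : ℝ) (hc : 0 < c) :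
    (Nmat c x)⁻¹ = (2 * Real.sqrt c)⁻¹ •
      !![Real.sqrt c * Real.exp (-(Real.sqrt c * x)), Real.exp (-(Real.sqrt c * x));
         Real.sqrt c * Real.exp (Real.sqrt c * x), -Real.exp (Real.sqrt c * x)] := by
  have hs : (0:ℝ) < Real.sqrt c := Real.sqrt_pos.mpr hc
  apply Matrix.inv_eq_right_inv
  have he : Real.exp (Real.sqrt c * x) * Real.exp (-(Real.sqrt c * x)) = 1 := by
    rw [← Real.exp_add]; simp
  rw [Matrix.mul_smul]
  ext i j
  fin_cases i <;> fin_cases j <;>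
    simp [Nmat, Matrix.mul_apply, Fin.sum_univ_two] <;>
    field_simp <;> first | nlinarith [he, hs] | (right; ring)

/-- the (1,1) entries of `P₁ = N(v)⁻¹M(v)M(u)⁻¹N(u)` and
`Q₁ = N(v)⁻¹M(v)M(u)⁻¹ − N(v)⁻¹`, and the resulting value of `γ₀`,
with `w = ½√(λ+μ)(v−u)`. -/
theorem statement10 (lam mu u v : ℝ) (hlam : 0 < lam) (hmu : 0 < mu) (huv : u < v)
    (w : ℝ) (hw : w = (1 / 2) * (Real.sqrt (lam + mu) * (v - u)))
    (P₁ Q₁ : Matrix (Fin 2) (Fin 2) ℝ)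
    (hP₁ : P₁ = (Nmat lam v)⁻¹ * Nmat (lam + mu) v * (Nmat (lam + mu) u)⁻¹ * Nmat lam u)
    (hQ₁ : Q₁ = (Nmat lam v)⁻¹ * Nmat (lam + mu) v * (Nmat (lam + mu) u)⁻¹ - (Nmat lam v)⁻¹) :
    P₁ 0 0 = Real.exp (Real.sqrt lam * (u - v)) / Real.sqrt (lam * (lam + mu)) *
        ((Real.sqrt lam * Real.cosh w + Real.sqrt (lam + mu) * Real.sinh w) *
          (Real.sqrt (lam + mu) * Real.cosh w + Real.sqrt lam * Real.sinh w)) ∧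
    Q₁ 0 0 = Real.exp (-(Real.sqrt lam * v)) / Real.sqrt lam *
        (Real.sinh w * (Real.sqrt (lam + mu) * Real.cosh w + Real.sqrt lam * Real.sinh w)) ∧
    -(mu / (lam * (lam + mu))) * (Q₁ 0 0 / P₁ 0 0) =
      -(mu / (lam * Real.sqrt (lam + mu))) *
        (Real.exp (-(Real.sqrt lam * u)) * Real.sinh w /
          (Real.sqrt lam * Real.cosh w + Real.sqrt (lam + mu) * Real.sinh w)) := by
  have hlm : 0 < lam + mu := by linarith
  set a := Real.sqrt lam with ha
  set b := Real.sqrt (lam + mu) with hb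
  have ha0 : 0 < a := Real.sqrt_pos.mpr hlam
  have hb0 : 0 < b := Real.sqrt_pos.mpr hlm
  have ha2 : a ^ 2 = lam := Real.sq_sqrt hlam.le
  have hb2 : b ^ 2 = lam + mu := Real.sq_sqrt hlm.le
  have hab : Real.sqrt (lam * (lam + mu)) = a * b := by
    rw [Real.sqrt_mul hlam.le]
  have h2w : b * v = b * u + 2 * w := by rw [hw]; ring
  have hbv : Real.exp (b * v) = Real.exp (b * u) * Real.exp w ^ 2 := by
    rw [h2w, Real.exp_add, two_mul, Real.exp_add, sq]
  have h1 : P₁ 0 0 = Real.exp (a * (u - v)) / Real.sqrt (lam * (lam + mu)) *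
      ((a * Real.cosh w + b * Real.sinh w) * (b * Real.cosh w + a * Real.sinh w)) := by
    subst hP₁
    rw [Nmat_inv _ _ hlam, Nmat_inv _ _ hlm]
    simp [Nmat, Matrix.mul_apply, Fin.sum_univ_two]
    rw [Real.cosh_eq, Real.sinh_eq, hab, mul_sub, Real.exp_sub]
    simp only [← ha, ← hb, hbv, Real.exp_neg]
    field_simp
    ring
  have h2 : Q₁ 0 0 = Real.exp (-(a * v)) / a *
      (Real.sinh w * (b * Real.cosh w + a * Real.sinh w)) := by
    subst hQ₁
    rw [Nmat_inv _ _ hlam, Nmat_inv _ _ hlm]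
    simp [Nmat, Matrix.mul_apply, Fin.sum_univ_two]
    rw [Real.cosh_eq, Real.sinh_eq]
    simp only [← ha, ← hb, hbv, Real.exp_neg]
    field_simp
    ring
  refine ⟨h1, h2, ?_⟩
  rw [h1, h2, hab]
  have hw0 : 0 < w := by
    rw [hw]; exact mul_pos (by norm_num) (mul_pos hb0 (sub_pos.mpr huv))
  have hs0 : 0 < Real.sinh w := Real.sinh_pos_iff.mpr hw0
  have hc0 : 0 < Real.cosh w := Real.cosh_pos w
  have hd1 : a * Real.cosh w + b * Real.sinh w ≠ 0 := by positivity
  have hd2 : b * Real.cosh w + a * Real.sinh w ≠ 0 := by positivity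
  rw [← hb2, ← ha2]
  rw [mul_sub, Real.exp_sub]
  simp only [Real.exp_neg]
  field_simp
end

section
/- Let λ > 0, μ > 0, u ∈ ℝ. For ε > 0 let M_ε(x) be the matrix ((e^{κ_ε x}, e^{−κ_ε x}), (κ_ε e^{κ_ε x}, −κ_ε e^{−κ_ε x})) with κ_ε = √(λ + μ/ε), and define P_ε = N(u+ε)^{−1} M_ε(u+ε) M_ε(u−ε)^{−1} N(u−ε) and Q_ε = N(u+ε)^{−1} M_ε(u+ε) M_ε(u−ε)^{−1} − N(u+ε)^{−1}. Then, as ε → 0⁺, P_ε converges to P̄ = (1/√λ)·((√λ+μ, μe^{−2√λ u}), (−μe^{2√λ u}, √λ−μ)) and Q_ε converges to Q̄ = (μ/√λ)·((e^{−√λ u}, 0), (−e^{√λ u}, 0)). -/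
/-!
On an interval of length `t`, the fundamental matrix of `y'' = k² y` is propagated by
`transferMatrix k t = ((cosh kt, sinh kt / k), (k sinh kt, cosh kt))`, so that
`M_ε(u+ε) M_ε(u−ε)⁻¹ = transferMatrix κ_ε (2ε)`. Since `κ_ε ε → 0` while
`κ_ε² ε = λε + μ → μ`, this tends to `T = ((1, 0), (2μ, 1))`, and by
continuity of `N` and `N⁻¹` the limits are `P̄ = N(u)⁻¹ T N(u)` and `Q̄ = N(u)⁻¹ (T − 1)`.
-/

open Matrix Real

open Filter
open Topology

theorem Real.tendsto_sinh_div_self : Tendsto (fun t => sinh t / t) (𝓝[≠] 0) (𝓝 1) := by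
  have h := hasDerivAt_iff_tendsto_slope.mp (hasDerivAt_sinh 0)
  rw [cosh_zero] at h
  exact h.congr fun t => by simp [slope_def_field]

theorem Filter.Tendsto.matrix_fin_two {α R : Type*} [TopologicalSpace R] {l : Filter α}
    {a b c d : α → R} {a₀ b₀ c₀ d₀ : R}
    (ha : Tendsto a l (𝓝 a₀)) (hb : Tendsto b l (𝓝 b₀))
    (hc : Tendsto c l (𝓝 c₀)) (hd : Tendsto d l (𝓝 d₀)) :
    Tendsto (fun x => !![a x, b x; c x, d x]) l (𝓝 !![a₀, b₀; c₀, d₀]) :=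
  (ha.matrixVecCons (hb.matrixVecCons tendsto_const_nhds)).matrixVecCons
    ((hc.matrixVecCons (hd.matrixVecCons tendsto_const_nhds)).matrixVecCons tendsto_const_nhds)

noncomputable def transferMatrix (k t : ℝ) : Matrix (Fin 2) (Fin 2) ℝ :=
  !![cosh (k * t), sinh (k * t) / k; k * sinh (k * t), cosh (k * t)]

theorem det_Nmat (lam x : ℝ) : (Nmat lam x).det = -(2 * √lam) := by
  have h : exp (√lam * x) * exp (-(√lam * x)) = 1 := by rw [← exp_add]; simp
  rw [Nmat, det_fin_two_of]
  linear_combination (-2 * √lam) * h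

theorem isUnit_det_Nmat {lam : ℝ} (hlam : 0 < lam) (x : ℝ) : IsUnit (Nmat lam x).det := by
  rw [det_Nmat]; simp [(sqrt_pos.mpr hlam).ne']

theorem continuous_Nmat (lam : ℝ) : Continuous (Nmat lam) := by
  unfold Nmat; fun_prop

theorem tendsto_inv_Nmat {lam : ℝ} (hlam : 0 < lam) (x : ℝ) :
    Tendsto (fun y => (Nmat lam y)⁻¹) (𝓝 x) (𝓝 (Nmat lam x)⁻¹) := by
  refine (continuousAt_matrix_inv _ ?_).tendsto.comp ((continuous_Nmat lam).tendsto x)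
  exact NormedRing.inverse_continuousAt (isUnit_det_Nmat hlam x).unit

theorem Nmat_add {lam : ℝ} (hlam : 0 < lam) (x t : ℝ) :
    Nmat lam (x + t) = transferMatrix √lam t * Nmat lam x := by
  have hs : √lam ≠ 0 := (sqrt_pos.mpr hlam).ne'
  ext i j
  fin_cases i <;> fin_cases j <;>
    simp [Nmat, transferMatrix, cosh_eq, sinh_eq, mul_add, exp_add, exp_neg] <;>
    field_simp <;> ring

theorem Nmat_add_mul_inv_Nmat {lam : ℝ} (hlam : 0 < lam) (x t : ℝ) :
    Nmat lam (x + t) * (Nmat lam x)⁻¹ = transferMatrix √lam t := by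
  rw [Nmat_add hlam, mul_nonsing_inv_cancel_right _ _ (isUnit_det_Nmat hlam x)]

theorem eventually_pos_add_div (lam : ℝ) {mu : ℝ} (hmu : 0 < mu) :
    ∀ᶠ ε in 𝓝[>] 0, 0 < lam + mu / ε :=
  (tendsto_atTop_add_const_left _ lam
    (tendsto_inv_nhdsGT_zero.const_mul_atTop hmu)).eventually_gt_atTop 0

theorem tendsto_sqrt_add_div_mul_self (lam mu : ℝ) :
    Tendsto (fun ε => √(lam + mu / ε) * ε) (𝓝[>] 0) (𝓝 0) := by
  have h : Tendsto (fun ε => √(lam * ε ^ 2 + mu * ε)) (𝓝 0) (𝓝 0) := by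
    have : Continuous fun ε : ℝ => √(lam * ε ^ 2 + mu * ε) := by fun_prop
    simpa using this.tendsto 0
  refine (h.mono_left nhdsWithin_le_nhds).congr' ?_
  filter_upwards [self_mem_nhdsWithin] with ε (hε : 0 < ε)
  rw [← sqrt_sq hε.le, ← sqrt_mul' _ (sq_nonneg ε), sqrt_sq hε.le]
  congr 1
  field_simp

theorem tendsto_transferMatrix_of {α : Type*} {l : Filter α} {κ ε : α → ℝ} {c : ℝ}
    (hne : ∀ᶠ x in l, κ x ≠ 0 ∧ ε x ≠ 0) (hε : Tendsto ε l (𝓝 0))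
    (hκε : Tendsto (fun x => κ x * ε x) l (𝓝 0))
    (hκκε : Tendsto (fun x => κ x ^ 2 * ε x) l (𝓝 c)) :
    Tendsto (fun x => transferMatrix (κ x) (2 * ε x)) l (𝓝 !![1, 0; 2 * c, 1]) := by
  have harg : Tendsto (fun x => κ x * (2 * ε x)) l (𝓝[≠] 0) := by
    refine tendsto_nhdsWithin_iff.mpr ⟨?_, ?_⟩
    · simpa [mul_left_comm] using hκε.const_mul 2
    · filter_upwards [hne] with x ⟨hκ, hε⟩
      simp [hκ, hε]
  have hsinc := tendsto_sinh_div_self.comp harg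
  have hcosh : Tendsto (fun x => cosh (κ x * (2 * ε x))) l (𝓝 1) :=
    (continuous_cosh.tendsto' 0 1 cosh_zero).comp (tendsto_nhdsWithin_iff.mp harg).1
  refine Tendsto.matrix_fin_two hcosh ?_ ?_ hcosh
  · have h := hsinc.mul (hε.const_mul 2)
    rw [mul_zero, mul_zero] at h
    refine h.congr' ?_
    filter_upwards [hne] with x ⟨hκ, hε⟩
    simp only [Function.comp_apply]
    field_simp
  · have h := hsinc.mul (hκκε.const_mul 2)
    rw [one_mul] at h
    refine h.congr' ?_
    filter_upwards [hne] with x ⟨hκ, hε⟩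
    simp only [Function.comp_apply]
    field_simp

theorem tendsto_transferMatrix (lam : ℝ) {mu : ℝ} (hmu : 0 < mu) :
    Tendsto (fun ε => transferMatrix √(lam + mu / ε) (2 * ε)) (𝓝[>] 0)
      (𝓝 !![1, 0; 2 * mu, 1]) := by
  have hpos := eventually_pos_add_div lam hmu
  have hε : Tendsto (fun ε : ℝ => ε) (𝓝[>] 0) (𝓝 0) := nhdsWithin_le_nhds
  refine tendsto_transferMatrix_of ?_ hε (tendsto_sqrt_add_div_mul_self lam mu) ?_
  · filter_upwards [hpos, self_mem_nhdsWithin] with ε hpos (hε : 0 < ε)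
    exact ⟨(sqrt_pos.mpr hpos).ne', hε.ne'⟩
  · have h : Tendsto (fun ε => lam * ε + mu) (𝓝[>] 0) (𝓝 mu) := by
      simpa using (hε.const_mul lam).add_const mu
    refine h.congr' ?_
    filter_upwards [hpos, self_mem_nhdsWithin] with ε hpos (hε : 0 < ε)
    rw [sq_sqrt hpos.le]
    field_simp

theorem inv_Nmat_mul_mul_Nmat {lam : ℝ} (hlam : 0 < lam) (mu u : ℝ) :
    (Nmat lam u)⁻¹ * !![1, 0; 2 * mu, 1] * Nmat lam u = (1 / √lam) •
      !![√lam + mu, mu * exp (-(2 * (√lam * u)));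
         -(mu * exp (2 * (√lam * u))), √lam - mu] := by
  have hs : √lam ≠ 0 := (sqrt_pos.mpr hlam).ne'
  have h : Nmat lam u * ((1 / √lam) •
      !![√lam + mu, mu * exp (-(2 * (√lam * u)));
         -(mu * exp (2 * (√lam * u))), √lam - mu]) = !![1, 0; 2 * mu, 1] * Nmat lam u := by
    ext i j
    fin_cases i <;> fin_cases j <;>
      simp [Nmat, two_mul, exp_add, exp_neg] <;> field_simp <;> ring
  rw [mul_assoc, ← h, nonsing_inv_mul_cancel_left _ _ (isUnit_det_Nmat hlam u)]

theorem inv_Nmat_mul_sub_inv_Nmat {lam : ℝ} (hlam : 0 < lam) (mu u : ℝ) :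
    (Nmat lam u)⁻¹ * !![1, 0; 2 * mu, 1] - (Nmat lam u)⁻¹ = (mu / √lam) •
      !![exp (-(√lam * u)), 0; -exp (√lam * u), 0] := by
  have hs : √lam ≠ 0 := (sqrt_pos.mpr hlam).ne'
  have h : Nmat lam u * ((mu / √lam) • !![exp (-(√lam * u)), 0; -exp (√lam * u), 0]) =
      !![1, 0; 2 * mu, 1] - 1 := by
    ext i j
    fin_cases i <;> fin_cases j <;>
      simp [Nmat, exp_neg] <;> field_simp <;> ring
  rw [← mul_one (Nmat lam u)⁻¹, mul_assoc, one_mul, ← mul_sub, ← h,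
    nonsing_inv_mul_cancel_left _ _ (isUnit_det_Nmat hlam u)]

/-- as `ε → 0⁺`, the matrices
`P_ε = N(u+ε)⁻¹ M_ε(u+ε) M_ε(u−ε)⁻¹ N(u−ε)` and
`Q_ε = N(u+ε)⁻¹ M_ε(u+ε) M_ε(u−ε)⁻¹ − N(u+ε)⁻¹` (where `M_ε` has parameter `λ + μ/ε`)
converge to the limit matrices `P̄` and `Q̄`. -/
theorem statement13 (lam mu u : ℝ) (hlam : 0 < lam) (hmu : 0 < mu) :
    Tendsto (fun ε : ℝ =>
        (Nmat lam (u + ε))⁻¹ * Nmat (lam + mu / ε) (u + ε) *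
          (Nmat (lam + mu / ε) (u - ε))⁻¹ * Nmat lam (u - ε))
      (nhdsWithin 0 (Set.Ioi 0))
      (nhds ((1 / Real.sqrt lam) •
        !![Real.sqrt lam + mu, mu * Real.exp (-(2 * (Real.sqrt lam * u)));
           -(mu * Real.exp (2 * (Real.sqrt lam * u))), Real.sqrt lam - mu])) ∧
    Tendsto (fun ε : ℝ =>
        (Nmat lam (u + ε))⁻¹ * Nmat (lam + mu / ε) (u + ε) *
          (Nmat (lam + mu / ε) (u - ε))⁻¹ - (Nmat lam (u + ε))⁻¹)
      (nhdsWithin 0 (Set.Ioi 0))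
      (nhds ((mu / Real.sqrt lam) •
        !![Real.exp (-(Real.sqrt lam * u)), 0;
           -(Real.exp (Real.sqrt lam * u)), 0])) := by
  have hε : Tendsto (fun ε : ℝ => ε) (𝓝[>] 0) (𝓝 0) := nhdsWithin_le_nhds
  have hT : Tendsto (fun ε => Nmat (lam + mu / ε) (u + ε) * (Nmat (lam + mu / ε) (u - ε))⁻¹)
      (𝓝[>] 0) (𝓝 !![1, 0; 2 * mu, 1]) := by
    refine (tendsto_transferMatrix lam hmu).congr' ?_
    filter_upwards [eventually_pos_add_div lam hmu] with ε hpos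
    rw [show u + ε = u - ε + 2 * ε by ring, Nmat_add_mul_inv_Nmat hpos]
  have hNinv : Tendsto (fun ε => (Nmat lam (u + ε))⁻¹) (𝓝[>] 0) (𝓝 (Nmat lam u)⁻¹) :=
    (tendsto_inv_Nmat hlam u).comp (by simpa using hε.const_add u)
  have hN : Tendsto (fun ε => Nmat lam (u - ε)) (𝓝[>] 0) (𝓝 (Nmat lam u)) :=
    ((continuous_Nmat lam).tendsto u).comp (by simpa using hε.const_sub u)
  constructor
  · rw [← inv_Nmat_mul_mul_Nmat hlam]
    simpa only [mul_assoc] using (hNinv.mul hT).mul hN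
  · rw [← inv_Nmat_mul_sub_inv_Nmat hlam]
    simpa only [mul_assoc] using (hNinv.mul hT).sub hNinv
end

section
/- Let λ > 0, μ > 0, ν > 0 and u < v. With P̄_1, P̄_2, Q̄_1, Q̄_2, R̄_2, S̄_2, γ̄_0 as in the two-point local time setting, put R̄_1 = P̄_1, S̄_1 = (1/λ)Q̄_1, B̄_0 = −γ̄_0 C_0, B̄_1 = S̄_1 C_0 − γ̄_0 R̄_1 C_0, B̄_2 = S̄_2 C_0 − γ̄_0 R̄_2 C_0, and let D = λ·[(√λ+μ)(√λ+ν) − μν·e^{2√λ(u−v)}]. Then for every x ∈ ℝ: the first entry of N(x)·B̄_0 equals −[μ(√λ + ν(1−e^{√λ(u−v)}))·e^{√λ(x−u)} + ν(√λ + μ(1−e^{√λ(u−v)}))·e^{√λ(x−v)}]/D; the first entry of N(x)·B̄_1 equals −[μ(√λ + ν(1−e^{√λ(u−v)}))·e^{√λ(u−x)} + ν(√λ + μ(1−e^{√λ(u−v)}))·e^{√λ(x−v)}]/D; and the first entry of N(x)·B̄_2 equals −[μ(√λ + ν(1−e^{√λ(u−v)}))·e^{√λ(u−x)} + ν(√λ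 + μ(1−e^{√λ(u−v)}))·e^{√λ(v−x)}]/D. In particular, for x ≤ u, u ≤ x ≤ v, x ≥ v respectively, (first entry of N(x)·B̄_i) + 1/λ equals (1/λ)·[1 − (μ(√λ + ν(1−e^{√λ(u−v)}))·e^{−√λ|x−u|} + ν(√λ + μ(1−e^{√λ(u−v)}))·e^{−√λ|x−v|})/((√λ+μ)(√λ+ν) − μν·e^{2√λ(u−v)})]. -/
/-!
Write `s = √λ` and `φᵢ(x)` for the first entry of `N(x) B̄ᵢ`. The definitions of `R̄ᵢ, S̄ᵢ` amount
to the recursion `B̄ᵢ = P̄ᵢ B̄ᵢ₋₁ + λ⁻¹ Q̄ᵢ C₀`, and `P̄ᵢ - 1` and `Q̄ᵢ C₀` both point along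
`(e^{-su}, -e^{su})`, whose image under `N(x)` has first entry `e^{s(x-u)} - e^{s(u-x)}`. So crossing
`u` adds `(μ/s)(φ(u) + 1/λ) (e^{s(x-u)} - e^{s(u-x)})` to `φ`. Computing
`γ̄₀ = (a e^{-su} + b e^{-sv}) / D` from the two first entries gives `φ₀`, and the jump
coefficients at `u` and `v` turn out to be exactly `a/D` and `b/D`, which trade the growing
exponentials `e^{s(x-u)}`, `e^{s(x-v)}` for the decaying ones past each point.
-/

open Matrix Real

theorem Nmat_mulVec_apply_zero (lam x : ℝ) (w : Fin 2 → ℝ) :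
    (Nmat lam x *ᵥ w) 0 = exp (√lam * x) * w 0 + exp (-(√lam * x)) * w 1 := by
  simp [Nmat, mulVec, dotProduct, Fin.sum_univ_two]

theorem Nmat_mulVec_jump_apply_zero (lam x u : ℝ) :
    (Nmat lam x *ᵥ ![exp (-(√lam * u)), -exp (√lam * u)]) 0 =
      exp (√lam * (x - u)) - exp (√lam * (u - x)) := by
  rw [Nmat_mulVec_apply_zero]
  simp only [cons_val_zero, cons_val_one, mul_neg, ← exp_add]
  ring_nf

section Transfer

variable {s mu nu u v : ℝ}

/-- `P̄` and `Q̄` of the paper at a point `u` of weight `μ`, written with `s = √λ`. -/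
noncomputable def transferMat (s mu u : ℝ) : Matrix (Fin 2) (Fin 2) ℝ :=
  (1 / s) • !![s + mu, mu * exp (-(2 * (s * u))); -(mu * exp (2 * (s * u))), s - mu]

noncomputable def sourceMat (s mu u : ℝ) : Matrix (Fin 2) (Fin 2) ℝ :=
  (mu / s) • !![exp (-(s * u)), 0; -(exp (s * u)), 0]

theorem transferMat_mulVec_add_sourceMat (hs : s ≠ 0) (w : Fin 2 → ℝ) (c : ℝ) :
    transferMat s mu u *ᵥ w + c • sourceMat s mu u *ᵥ ![1, 0] =
      w + (mu / s * (exp (s * u) * w 0 + exp (-(s * u)) * w 1 + c)) •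
        ![exp (-(s * u)), -exp (s * u)] := by
  ext i
  fin_cases i <;>
  · simp only [transferMat, sourceMat, smul_of, smul_cons, smul_eq_mul, smul_empty, cons_mulVec,
        dotProduct, Fin.sum_univ_two, cons_val_zero, cons_val_one, cons_val_fin_one, empty_mulVec,
        mulVec_cons, mulVec_empty, Pi.add_apply, Pi.smul_apply, Function.comp_apply, head_cons,
        Fin.zero_eta, Fin.mk_one, two_mul, exp_add, Real.exp_neg, mul_zero, add_zero, zero_smul,
        one_smul]
    field_simp
    ring

theorem Nmat_mulVec_transferMat_add_sourceMat_apply_zero {lam : ℝ} (hlam : 0 < lam)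
    (w : Fin 2 → ℝ) (c x : ℝ) :
    (Nmat lam x *ᵥ (transferMat √lam mu u *ᵥ w + c • sourceMat √lam mu u *ᵥ ![1, 0])) 0 =
      (Nmat lam x *ᵥ w) 0 +
        mu / √lam * ((Nmat lam u *ᵥ w) 0 + c) * (exp (√lam * (x - u)) - exp (√lam * (u - x))) := by
  rw [transferMat_mulVec_add_sourceMat (Real.sqrt_pos.2 hlam).ne', mulVec_add, mulVec_smul,
    Pi.add_apply, Pi.smul_apply, smul_eq_mul, Nmat_mulVec_jump_apply_zero,
    Nmat_mulVec_apply_zero lam u]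

theorem transferMat_mul_transferMat_mulVec_apply_zero (hs : s ≠ 0) :
    ((transferMat s nu v * transferMat s mu u) *ᵥ ![1, 0]) 0 =
      ((s + mu) * (s + nu) - mu * nu * exp (s * (u - v)) ^ 2) / s ^ 2 := by
  simp only [mulVec, dotProduct, transferMat, smul_of, smul_cons, smul_eq_mul, smul_empty, cons_mul,
    vecMul_cons, empty_vecMul, add_cons, empty_add_empty, empty_mul, of_apply,
    cons_val', cons_val_fin_one, cons_val_zero, cons_val_one, Fin.sum_univ_two, head_cons,
    tail_cons, two_mul, exp_add, Real.exp_neg, mul_sub, exp_sub, mul_one, mul_zero, add_zero]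
  field_simp
  ring

theorem sourceMat_add_transferMat_mul_sourceMat_mulVec_apply_zero (hs : s ≠ 0) :
    ((sourceMat s nu v + transferMat s nu v * sourceMat s mu u) *ᵥ ![1, 0]) 0 =
      (mu * (s + nu * (1 - exp (s * (u - v)))) * exp (-(s * u)) +
        nu * (s + mu * (1 - exp (s * (u - v)))) * exp (-(s * v))) / s ^ 2 := by
  simp only [mulVec, dotProduct, sourceMat, transferMat, smul_of, smul_cons, smul_eq_mul,
    smul_empty, cons_mul, vecMul_cons, empty_vecMul, add_cons, empty_add_empty,
    empty_mul, Matrix.add_apply, of_apply, cons_val', cons_val_fin_one, cons_val_zero,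
    cons_val_one, Fin.sum_univ_two, head_cons, tail_cons, two_mul, exp_add, Real.exp_neg, mul_sub,
    exp_sub, mul_one, mul_zero, add_zero]
  field_simp
  ring

end Transfer

theorem twoPoint_denom_pos {s mu nu E : ℝ} (hs : 0 < s) (hmu : 0 ≤ mu) (hnu : 0 ≤ nu)
    (hE₀ : 0 ≤ E) (hE₁ : E ≤ 1) : 0 < (s + mu) * (s + nu) - mu * nu * E ^ 2 := by
  have hE2 : E ^ 2 ≤ 1 := pow_le_one₀ hE₀ hE₁
  nlinarith [mul_nonneg hmu hnu, mul_nonneg (mul_nonneg hmu hnu) (sub_nonneg.2 hE2)]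

theorem jump_coeff_eq {s lam mu nu E a b D : ℝ} (hs : s ≠ 0) (hlam : lam ≠ 0) (hD₀ : D ≠ 0)
    (ha : a = mu * (s + nu * (1 - E))) (hb : b = nu * (s + mu * (1 - E)))
    (hD : D = lam * ((s + mu) * (s + nu) - mu * nu * E ^ 2)) :
    mu / s * (-((a + b * E) / D) + 1 / lam) = a / D := by
  field_simp
  rw [hD, ha, hb]
  ring

theorem exp_neg_mul_abs_sub_of_le {s x y : ℝ} (h : x ≤ y) :
    exp (-(s * |x - y|)) = exp (s * (x - y)) := by
  rw [abs_of_nonpos (sub_nonpos.2 h)]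
  ring_nf

theorem exp_neg_mul_abs_sub_of_ge {s x y : ℝ} (h : y ≤ x) :
    exp (-(s * |x - y|)) = exp (s * (y - x)) := by
  rw [abs_of_nonneg (sub_nonneg.2 h)]
  ring_nf

theorem add_one_div_eq_of_eq_neg_div {lam K D t φ : ℝ} (hlam : lam ≠ 0) (hK : K ≠ 0)
    (hD : D = lam * K) (hφ : φ = -(t / D)) : φ + 1 / lam = 1 / lam * (1 - t / K) := by
  rw [hφ, hD]
  field_simp
  ring

theorem twoPoint_firstEntry_eq {lam mu nu u v γ a b D : ℝ} {B₀ B₁ B₂ : Fin 2 → ℝ}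
    (hlam : 0 < lam) (hD₀ : D ≠ 0)
    (ha : a = mu * (√lam + nu * (1 - exp (√lam * (u - v)))))
    (hb : b = nu * (√lam + mu * (1 - exp (√lam * (u - v)))))
    (hD : D = lam * ((√lam + mu) * (√lam + nu) - mu * nu * exp (√lam * (u - v)) ^ 2))
    (hγ : γ = (a * exp (-(√lam * u)) + b * exp (-(√lam * v))) / D)
    (hB₀ : B₀ = -γ • ![1, 0])
    (hB₁ : B₁ = transferMat √lam mu u *ᵥ B₀ + (1 / lam) • sourceMat √lam mu u *ᵥ ![1, 0])
    (hB₂ : B₂ = transferMat √lam nu v *ᵥ B₁ + (1 / lam) • sourceMat √lam nu v *ᵥ ![1, 0]) :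
    (∀ x, (Nmat lam x *ᵥ B₀) 0 = -((a * exp (√lam * (x - u)) + b * exp (√lam * (x - v))) / D)) ∧
    (∀ x, (Nmat lam x *ᵥ B₁) 0 = -((a * exp (√lam * (u - x)) + b * exp (√lam * (x - v))) / D)) ∧
    (∀ x, (Nmat lam x *ᵥ B₂) 0 = -((a * exp (√lam * (u - x)) + b * exp (√lam * (v - x))) / D)) := by
  have hs : √lam ≠ 0 := (Real.sqrt_pos.2 hlam).ne'
  have hφ₀ : ∀ x, (Nmat lam x *ᵥ B₀) 0 =
      -((a * exp (√lam * (x - u)) + b * exp (√lam * (x - v))) / D) := by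
    intro x
    rw [Nmat_mulVec_apply_zero, hB₀, hγ, mul_sub, mul_sub, exp_sub, exp_sub, exp_neg, exp_neg]
    simp only [Pi.smul_apply, cons_val_zero, cons_val_one, smul_eq_mul, mul_one, mul_zero,
      add_zero]
    ring
  have hφ₁ : ∀ x, (Nmat lam x *ᵥ B₁) 0 =
      -((a * exp (√lam * (u - x)) + b * exp (√lam * (x - v))) / D) := by
    have hc : mu / √lam * ((Nmat lam u *ᵥ B₀) 0 + 1 / lam) = a / D := by
      rw [hφ₀, sub_self, mul_zero, exp_zero, mul_one]
      exact jump_coeff_eq hs hlam.ne' hD₀ ha hb hD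
    intro x
    rw [hB₁, Nmat_mulVec_transferMat_add_sourceMat_apply_zero hlam, hc, hφ₀]
    ring
  refine ⟨hφ₀, hφ₁, fun x => ?_⟩
  have hc : nu / √lam * ((Nmat lam v *ᵥ B₁) 0 + 1 / lam) = b / D := by
    rw [hφ₁, sub_self, mul_zero, exp_zero, mul_one, add_comm (a * _)]
    exact jump_coeff_eq hs hlam.ne' hD₀ hb ha (by rw [hD]; ring)
  rw [hB₂, Nmat_mulVec_transferMat_add_sourceMat_apply_zero hlam, hc, hφ₁]
  ring

/-- explicit first entries of `N(x)B̄₀`, `N(x)B̄₁`, `N(x)B̄₂` in the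
two-point local time setting, and the resulting unified formula for the iterated
Laplace transform of the pair of Brownian local times at `u` and `v`.
Here `a = μ(√λ + ν(1−e^{√λ(u−v)}))`, `b = ν(√λ + μ(1−e^{√λ(u−v)}))` and
`D = λ[(√λ+μ)(√λ+ν) − μν e^{2√λ(u−v)}]`. -/
theorem statement19 (lam mu nu u v : ℝ) (hlam : 0 < lam) (hmu : 0 < mu) (hnu : 0 < nu)
    (huv : u < v)
    (P₁ P₂ Q₁ Q₂ R₁ R₂ S₁ S₂ : Matrix (Fin 2) (Fin 2) ℝ)
    (hP₁ : P₁ = (1 / Real.sqrt lam) •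
      !![Real.sqrt lam + mu, mu * Real.exp (-(2 * (Real.sqrt lam * u)));
         -(mu * Real.exp (2 * (Real.sqrt lam * u))), Real.sqrt lam - mu])
    (hP₂ : P₂ = (1 / Real.sqrt lam) •
      !![Real.sqrt lam + nu, nu * Real.exp (-(2 * (Real.sqrt lam * v)));
         -(nu * Real.exp (2 * (Real.sqrt lam * v))), Real.sqrt lam - nu])
    (hQ₁ : Q₁ = (mu / Real.sqrt lam) •
      !![Real.exp (-(Real.sqrt lam * u)), 0;
         -(Real.exp (Real.sqrt lam * u)), 0])
    (hQ₂ : Q₂ = (nu / Real.sqrt lam) •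
      !![Real.exp (-(Real.sqrt lam * v)), 0;
         -(Real.exp (Real.sqrt lam * v)), 0])
    (hR₁ : R₁ = P₁) (hR₂ : R₂ = P₂ * P₁)
    (hS₁ : S₁ = (1 / lam) • Q₁) (hS₂ : S₂ = (1 / lam) • (Q₂ + P₂ * Q₁))
    (γ₀ : ℝ) (hγ₀ : γ₀ = (S₂.mulVec ![1, 0]) 0 / (R₂.mulVec ![1, 0]) 0)
    (B₀ B₁ B₂ : Fin 2 → ℝ)
    (hB₀ : B₀ = -γ₀ • (![1, 0] : Fin 2 → ℝ))
    (hB₁ : B₁ = S₁.mulVec ![1, 0] - γ₀ • R₁.mulVec ![1, 0])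
    (hB₂ : B₂ = S₂.mulVec ![1, 0] - γ₀ • R₂.mulVec ![1, 0])
    (a b D : ℝ)
    (ha : a = mu * (Real.sqrt lam + nu * (1 - Real.exp (Real.sqrt lam * (u - v)))))
    (hb : b = nu * (Real.sqrt lam + mu * (1 - Real.exp (Real.sqrt lam * (u - v)))))
    (hD : D = lam * ((Real.sqrt lam + mu) * (Real.sqrt lam + nu) -
      mu * nu * Real.exp (2 * (Real.sqrt lam * (u - v))))) :
    (∀ x : ℝ, ((Nmat lam x).mulVec B₀) 0 =
      -((a * Real.exp (Real.sqrt lam * (x - u)) +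
          b * Real.exp (Real.sqrt lam * (x - v))) / D)) ∧
    (∀ x : ℝ, ((Nmat lam x).mulVec B₁) 0 =
      -((a * Real.exp (Real.sqrt lam * (u - x)) +
          b * Real.exp (Real.sqrt lam * (x - v))) / D)) ∧
    (∀ x : ℝ, ((Nmat lam x).mulVec B₂) 0 =
      -((a * Real.exp (Real.sqrt lam * (u - x)) +
          b * Real.exp (Real.sqrt lam * (v - x))) / D)) ∧
    (∀ x : ℝ,
      (x ≤ u → ((Nmat lam x).mulVec B₀) 0 + 1 / lam = (1 / lam) *
        (1 - (a * Real.exp (-(Real.sqrt lam * |x - u|)) +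
            b * Real.exp (-(Real.sqrt lam * |x - v|))) /
          ((Real.sqrt lam + mu) * (Real.sqrt lam + nu) -
            mu * nu * Real.exp (2 * (Real.sqrt lam * (u - v)))))) ∧
      (u ≤ x → x ≤ v → ((Nmat lam x).mulVec B₁) 0 + 1 / lam = (1 / lam) *
        (1 - (a * Real.exp (-(Real.sqrt lam * |x - u|)) +
            b * Real.exp (-(Real.sqrt lam * |x - v|))) /
          ((Real.sqrt lam + mu) * (Real.sqrt lam + nu) -
            mu * nu * Real.exp (2 * (Real.sqrt lam * (u - v)))))) ∧
      (v ≤ x → ((Nmat lam x).mulVec B₂) 0 + 1 / lam = (1 / lam) *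
        (1 - (a * Real.exp (-(Real.sqrt lam * |x - u|)) +
            b * Real.exp (-(Real.sqrt lam * |x - v|))) /
          ((Real.sqrt lam + mu) * (Real.sqrt lam + nu) -
            mu * nu * Real.exp (2 * (Real.sqrt lam * (u - v))))))) := by
  have hs : 0 < √lam := Real.sqrt_pos.2 hlam
  have hE₁ : exp (√lam * (u - v)) ≤ 1 :=
    exp_le_one_iff.2 (mul_nonpos_of_nonneg_of_nonpos hs.le (sub_nonpos.2 huv.le))
  rw [show exp (2 * (√lam * (u - v))) = exp (√lam * (u - v)) ^ 2 by rw [two_mul, exp_add, sq]]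
    at hD ⊢
  have hK := twoPoint_denom_pos hs hmu.le hnu.le (exp_pos _).le hE₁
  have hD₀ : D ≠ 0 := hD ▸ (mul_pos hlam hK).ne'
  replace hP₁ : P₁ = transferMat √lam mu u := hP₁
  replace hP₂ : P₂ = transferMat √lam nu v := hP₂
  replace hQ₁ : Q₁ = sourceMat √lam mu u := hQ₁
  replace hQ₂ : Q₂ = sourceMat √lam nu v := hQ₂
  have hγ : γ₀ = (a * exp (-(√lam * u)) + b * exp (-(√lam * v))) / D := by
    rw [hγ₀, hS₂, hR₂, hP₁, hP₂, hQ₁, hQ₂, smul_mulVec, Pi.smul_apply, smul_eq_mul,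
      sourceMat_add_transferMat_mul_sourceMat_mulVec_apply_zero hs.ne',
      transferMat_mul_transferMat_mulVec_apply_zero hs.ne', ha, hb, hD]
    field_simp
  have hB₁' : B₁ = P₁ *ᵥ B₀ + (1 / lam) • Q₁ *ᵥ ![1, 0] := by
    rw [hB₁, hS₁, hR₁, hB₀, smul_mulVec, mulVec_smul, neg_smul]
    abel
  have hB₂' : B₂ = P₂ *ᵥ B₁ + (1 / lam) • Q₂ *ᵥ ![1, 0] := by
    rw [hB₂, hB₁, hS₂, hS₁, hR₂, hR₁, smul_mulVec, smul_mulVec, add_mulVec, ← mulVec_mulVec,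
      ← mulVec_mulVec, mulVec_sub, mulVec_smul, mulVec_smul, smul_add]
    abel
  obtain ⟨hφ₀, hφ₁, hφ₂⟩ := twoPoint_firstEntry_eq hlam hD₀ ha hb hD hγ hB₀
    (hP₁ ▸ hQ₁ ▸ hB₁') (hP₂ ▸ hQ₂ ▸ hB₂')
  refine ⟨hφ₀, hφ₁, hφ₂, fun x => ⟨fun hxu => ?_, fun hux hxv => ?_, fun hvx => ?_⟩⟩
  · rw [exp_neg_mul_abs_sub_of_le hxu, exp_neg_mul_abs_sub_of_le (hxu.trans huv.le)]
    exact add_one_div_eq_of_eq_neg_div hlam.ne' hK.ne' hD (hφ₀ x)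
  · rw [exp_neg_mul_abs_sub_of_ge hux, exp_neg_mul_abs_sub_of_le hxv]
    exact add_one_div_eq_of_eq_neg_div hlam.ne' hK.ne' hD (hφ₁ x)
  · rw [exp_neg_mul_abs_sub_of_ge (huv.le.trans hvx), exp_neg_mul_abs_sub_of_ge hvx]
    exact add_one_div_eq_of_eq_neg_div hlam.ne' hK.ne' hD (hφ₂ x)
end
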